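/- arXiv:1807.01821 — 9 statements merged into one kernel-verified Lean document; each statement's English description precedes it below -/
import Mathlib

section
/- Let G and H be finite non-abelian groups. If G and H are isoclinic, then the transversal commuting graphs T(G) and T(H) are isomorphic. -/
/-- The commuting graph of a group `G` on a subset `X`. -/
def commGraph (G : Type*) [Group G] (X : Set G) : SimpleGraph X where
  Adj x y := x ≠ y ∧ (x : G) * y = (y : G) * x
  symm := ⟨fun x y ⟨h1, h2⟩ => ⟨h1.symm, h2.symm⟩⟩
  loopless := ⟨fun x ⟨h, _⟩ => h rfl⟩

/-- `T` is a transversal of the center of `G`: each coset of `Z(G)` contains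
exactly one element of `T`. -/
def IsCenterTransversal (G : Type*) [Group G] (T : Set G) : Prop :=
  ∀ g : G, ∃! t, t ∈ T ∧ g⁻¹ * t ∈ Subgroup.center G

/-- The graph `T(G)`: the commuting graph of `G` on `T \ Z(G)`. -/
def TGraph (G : Type*) [Group G] (T : Set G) :
    SimpleGraph ↥(T \ (Subgroup.center G : Set G)) :=
  commGraph G (T \ (Subgroup.center G : Set G))

/-- Strongly regular graph with parameters `(v, k, l, m)` (with `0 < k < v - 1`). -/
def IsSRG {V : Type*} (G : SimpleGraph V) (v k l m : ℕ) : Prop :=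
  Nat.card V = v ∧ 0 < k ∧ k + 1 < v ∧
    (∀ x, (G.neighborSet x).ncard = k) ∧
    (∀ x y, G.Adj x y → (G.neighborSet x ∩ G.neighborSet y).ncard = l) ∧
    (∀ x y, x ≠ y → ¬ G.Adj x y → (G.neighborSet x ∩ G.neighborSet y).ncard = m)

/-- The disjoint union of `m` copies of the complete graph `K_n`. -/
def mKn (m n : ℕ) : SimpleGraph (Fin m × Fin n) where
  Adj x y := x ≠ y ∧ x.1 = y.1
  symm := ⟨fun x y ⟨h1, h2⟩ => ⟨h1.symm, h2.symm⟩⟩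
  loopless := ⟨fun x ⟨h, _⟩ => h rfl⟩

open scoped commutatorElement

theorem commutator_mem_commutatorSubgroup {G : Type*} [Group G] (x y : G) :
    ⁅x, y⁆ ∈ commutator G := by
  rw [commutator_def]
  exact Subgroup.commutator_mem_commutator (Subgroup.mem_top x) (Subgroup.mem_top y)

/-- Isoclinism of groups. -/
def Isoclinic (G H : Type*) [Group G] [Group H] : Prop :=
  ∃ (φ : G ⧸ Subgroup.center G ≃* H ⧸ Subgroup.center H)
    (ψ : commutator G ≃* commutator H),
    ∀ (x y : G) (x' y' : H),
      φ (QuotientGroup.mk x) = QuotientGroup.mk x' →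
      φ (QuotientGroup.mk y) = QuotientGroup.mk y' →
      (ψ ⟨⁅x, y⁆, commutator_mem_commutatorSubgroup x y⟩ : H) = ⁅x', y'⁆

/-- An extraspecial `p`-group: `G' = Z(G) = Φ(G)` and `|Z(G)| = p`. -/
def IsExtraspecial (p : ℕ) (G : Type*) [Group G] : Prop :=
  IsPGroup p G ∧ commutator G = Subgroup.center G ∧
    frattini G = Subgroup.center G ∧ Nat.card (Subgroup.center G) = p

open Pointwise Subgroup

/-!
A centre transversal `T` identifies `T \ Z(G)` with the nontrivial cosets of `Z(G)`. An isoclinism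
`(φ, ψ)` matches the cosets via `φ`, and since `ψ` is injective and carries `⁅x, y⁆` to `⁅x', y'⁆`,
a pair commutes exactly when the matched pair does. Composing the two identifications with `φ`
gives the graph isomorphism.
-/

namespace IsCenterTransversal

variable {G : Type*} [Group G] {T : Set G}

lemma mk_injOn (hT : IsCenterTransversal G T) :
    Set.InjOn (QuotientGroup.mk : G → G ⧸ center G) T := by
  intro s hs s' hs' heq
  obtain ⟨t, -, ht⟩ := hT s
  rw [ht s ⟨hs, by simp⟩, ht s' ⟨hs', QuotientGroup.eq.mp heq⟩]

lemma exists_mem_mk_eq (hT : IsCenterTransversal G T) (q : G ⧸ center G) :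
    ∃ t ∈ T, (t : G ⧸ center G) = q := by
  obtain ⟨t, ⟨htT, htz⟩, -⟩ := hT q.out
  exact ⟨t, htT, (QuotientGroup.eq.mpr htz).symm.trans (QuotientGroup.out_eq' q)⟩

noncomputable def equivNeOne (hT : IsCenterTransversal G T) :
    ↥(T \ (center G : Set G)) ≃ {q : G ⧸ center G // q ≠ 1} :=
  Equiv.ofBijective
    (fun t => ⟨t.1, fun h => t.2.2 ((QuotientGroup.eq_one_iff _).mp h)⟩)
    ⟨fun t t' h => Subtype.ext (hT.mk_injOn t.2.1 t'.2.1 (congrArg Subtype.val h)),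
      fun q => by
        obtain ⟨t, htT, hq⟩ := hT.exists_mem_mk_eq q.1
        exact ⟨⟨t, htT, fun hz => q.2 (hq ▸ (QuotientGroup.eq_one_iff t).mpr hz)⟩, Subtype.ext hq⟩⟩

lemma mk_equivNeOne_symm (hT : IsCenterTransversal G T) (q : {q : G ⧸ center G // q ≠ 1}) :
    ((hT.equivNeOne.symm q : G) : G ⧸ center G) = q :=
  congrArg Subtype.val (hT.equivNeOne.apply_symm_apply q)

end IsCenterTransversal

lemma Isoclinic.exists_commute_iff {G H : Type*} [Group G] [Group H] (h : Isoclinic G H) :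
    ∃ φ : G ⧸ center G ≃* H ⧸ center H, ∀ (x y : G) (x' y' : H),
      φ x = x' → φ y = y' → (Commute x y ↔ Commute x' y') := by
  obtain ⟨φ, ψ, hψ⟩ := h
  refine ⟨φ, fun x y x' y' hx hy => ?_⟩
  rw [← commutatorElement_eq_one_iff_commute, ← commutatorElement_eq_one_iff_commute,
    ← hψ x y x' y' hx hy, OneMemClass.coe_eq_one, MulEquiv.map_eq_one_iff, ← Subtype.val_inj]
  rfl

theorem stmt1_general (G H : Type*) [Group G] [Group H]
    (h : Isoclinic G H) (T : Set G) (S : Set H)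
    (hT : IsCenterTransversal G T) (hS : IsCenterTransversal H S) :
    Nonempty (TGraph G T ≃g TGraph H S) := by
  obtain ⟨φ, hφ⟩ := h.exists_commute_iff
  let φ' : {q : G ⧸ center G // q ≠ 1} ≃ {q : H ⧸ center H // q ≠ 1} :=
    φ.toEquiv.subtypeEquiv fun _ => φ.map_ne_one_iff.symm
  let e := hT.equivNeOne.trans (φ'.trans hS.equivNeOne.symm)
  have he : ∀ t : ↥(T \ (center G : Set G)), φ (t : G) = ((e t : H) : H ⧸ center H) := fun t =>
    (hS.mk_equivNeOne_symm (φ' (hT.equivNeOne t))).symm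
  exact ⟨⟨e, fun {t₁ t₂} => and_congr e.injective.ne_iff (hφ t₁ t₂ _ _ (he t₁) (he t₂)).symm⟩⟩

theorem stmt1 (G H : Type*) [Group G] [Group H] [Finite G] [Finite H]
    (hna : ∃ a b : G, a * b ≠ b * a) (hna' : ∃ a b : H, a * b ≠ b * a)
    (h : Isoclinic G H) (T : Set G) (S : Set H)
    (hT : IsCenterTransversal G T) (hS : IsCenterTransversal H S) :
    Nonempty (TGraph G T ≃g TGraph H S) :=
  stmt1_general G H h T S hT hS
end

section
/- Let G be a finite non-abelian group and let x, y be distinct adjacent vertices of T(G). Then the number of common neighbours of x and y in T(G) equals [C_G(x) ∩ C_G(y) : Z(G)] − 3. -/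
open scoped commutatorElement

open Pointwise Subgroup

/-! The vertices of `T(G)` lying in `C = C_G(x) ∩ C_G(y)` are `x`, `y` and their common
neighbours. Together with the one element of `T` in `Z(G) ≤ C` these are exactly the elements
of `T` in `C`, and since `T` meets every coset of `Z(G)` once, there are `[C : Z(G)]` of them. -/

theorem Subgroup.card_inter_eq_relIndex {G : Type*} [Group G] {K H : Subgroup G} {T : Set G}
    (hT : ∀ g : G, ∃! t, t ∈ T ∧ g⁻¹ * t ∈ K) (hKH : K ≤ H) :
    Nat.card ↥(T ∩ (H : Set G)) = K.relIndex H := by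
  refine Nat.card_congr <| Equiv.ofBijective
    (fun t : ↥(T ∩ (H : Set G)) ↦ (QuotientGroup.mk ⟨t, t.2.2⟩ : H ⧸ K.subgroupOf H))
    ⟨?_, ?_⟩
  · rintro ⟨a, haT, _⟩ ⟨b, hbT, _⟩ hab
    have hcoset : a⁻¹ * b ∈ K := mem_subgroupOf.mp (QuotientGroup.eq.mp hab)
    obtain ⟨t, -, ht⟩ := hT a
    exact Subtype.ext <| (ht a ⟨haT, by simp⟩).trans (ht b ⟨hbT, hcoset⟩).symm
  · refine QuotientGroup.mk_surjective.forall.mpr fun h ↦ ?_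
    obtain ⟨t, ⟨htT, htK⟩, -⟩ := hT h
    have htH : t ∈ H := by simpa using H.mul_mem h.2 (hKH htK)
    exact ⟨⟨t, htT, htH⟩,
      QuotientGroup.eq.mpr <| mem_subgroupOf.mpr (by simpa using K.inv_mem htK)⟩

theorem commGraph_image_val_neighborSet_inter {G : Type*} [Group G] {X : Set G} (x y : X) :
    Subtype.val '' ((commGraph G X).neighborSet x ∩ (commGraph G X).neighborSet y)
      = (X ∩ ((centralizer {(x : G)} ⊓ centralizer {(y : G)} : Subgroup G) : Set G))
          \ {(x : G), (y : G)} := by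
  ext g
  simp only [Set.mem_image, Set.mem_inter_iff, SimpleGraph.mem_neighborSet, commGraph,
    SetLike.mem_coe, mem_inf, mem_centralizer_singleton_iff, Set.mem_sdiff,
    Set.mem_insert_iff, Set.mem_singleton_iff, not_or]
  constructor
  · rintro ⟨z, ⟨⟨hxz, hx⟩, hyz, hy⟩, rfl⟩
    exact ⟨⟨z.2, hx.symm, hy.symm⟩, fun h ↦ hxz (Subtype.ext h.symm),
      fun h ↦ hyz (Subtype.ext h.symm)⟩
  · rintro ⟨⟨hgX, hx, hy⟩, hgx, hgy⟩
    exact ⟨⟨g, hgX⟩, ⟨⟨fun h ↦ hgx (congrArg Subtype.val h).symm, hx.symm⟩,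
      fun h ↦ hgy (congrArg Subtype.val h).symm, hy.symm⟩, rfl⟩

theorem commGraph_ncard_neighborSet_inter_add_two {G : Type*} [Group G] [Finite G] {X : Set G}
    {x y : X} (hxy : (commGraph G X).Adj x y) :
    ((commGraph G X).neighborSet x ∩ (commGraph G X).neighborSet y).ncard + 2
      = (X ∩ ((centralizer {(x : G)} ⊓ centralizer {(y : G)} : Subgroup G) : Set G)).ncard := by
  have hpair : {(x : G), (y : G)}
      ⊆ X ∩ ((centralizer {(x : G)} ⊓ centralizer {(y : G)} : Subgroup G) : Set G) := by
    rintro g (rfl | rfl)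
    · exact ⟨x.2, mem_centralizer_singleton_iff.mpr rfl,
        mem_centralizer_singleton_iff.mpr hxy.2⟩
    · exact ⟨y.2, mem_centralizer_singleton_iff.mpr hxy.2.symm,
        mem_centralizer_singleton_iff.mpr rfl⟩
  rw [← Set.ncard_pair (Subtype.val_injective.ne hxy.1),
    ← Set.ncard_image_of_injective _ Subtype.val_injective,
    commGraph_image_val_neighborSet_inter,
    Set.ncard_sdiff_add_ncard_of_subset hpair]

theorem stmt3_general (G : Type*) [Group G] [Finite G]
    (T : Set G) (hT : IsCenterTransversal G T) (x y : ↥(T \ (Subgroup.center G : Set G))) (hxy : (TGraph G T).Adj x y) :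
    ((TGraph G T).neighborSet x ∩ (TGraph G T).neighborSet y).ncard
      = (Subgroup.center G).relIndex
          (Subgroup.centralizer {(x : G)} ⊓ Subgroup.centralizer {(y : G)}) - 3 := by
  set C := Subgroup.centralizer {(x : G)} ⊓ Subgroup.centralizer {(y : G)}
  have hZC : center G ≤ C := le_inf (center_le_centralizer _) (center_le_centralizer _)
  have hindex : (T ∩ (C : Set G)).ncard = (center G).relIndex C := by
    rw [← Nat.card_coe_set_eq, Subgroup.card_inter_eq_relIndex hT hZC]
  have hcentral : (T ∩ (center G : Set G)).ncard = 1 := by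
    rw [← Nat.card_coe_set_eq, Subgroup.card_inter_eq_relIndex hT le_rfl, relIndex_self]
  have hsplit : (T ∩ (C : Set G)).ncard
      = (T ∩ (center G : Set G)).ncard + ((T \ (center G : Set G)) ∩ (C : Set G)).ncard := by
    rw [← Set.ncard_inter_add_ncard_sdiff_eq_ncard (T ∩ (C : Set G)) (center G),
      Set.inter_assoc, Set.inter_eq_right.mpr hZC, Set.inter_sdiff_right_comm]
  have hcommon := commGraph_ncard_neighborSet_inter_add_two hxy
  rw [← hindex, hsplit, hcentral, ← hcommon]
  unfold TGraph
  omega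

theorem stmt3 (G : Type*) [Group G] [Finite G] (hna : ∃ a b : G, a * b ≠ b * a)
    (T : Set G) (hT : IsCenterTransversal G T) (x y : ↥(T \ (Subgroup.center G : Set G))) (hxy : (TGraph G T).Adj x y) :
    ((TGraph G T).neighborSet x ∩ (TGraph G T).neighborSet y).ncard
      = (Subgroup.center G).relIndex
          (Subgroup.centralizer {(x : G)} ⊓ Subgroup.centralizer {(y : G)}) - 3 :=
  stmt3_general G T hT x y hxy
end

section
/- Let G be a finite non-abelian group and let x, y be distinct non-adjacent vertices of T(G). Then the number of common neighbours of x and y in T(G) equals [C_G(x) ∩ C_G(y) : Z(G)] − 1. -/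
open scoped commutatorElement

open Pointwise Subgroup

/-
Common neighbours of two non-commuting vertices `x, y` are exactly the elements of
`T \ Z(G)` lying in `H = C_G(x) ∩ C_G(y)`; neither `x` nor `y` lies in `H`, so no vertex has to be
excluded. Since `Z(G) ≤ H`, the elements of `T ∩ H` represent the cosets of `Z(G)` in `H`
bijectively, and removing the one representing `Z(G)` itself leaves `[H : Z(G)] - 1` of them.
-/

section CommGraph

variable {G : Type*} [Group G] {X : Set G}

theorem commGraph_mem_neighborSet_inter_iff {x y t : X} (hxy : (x : G) * y ≠ y * x) :
    t ∈ (commGraph G X).neighborSet x ∩ (commGraph G X).neighborSet y ↔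
      (t : G) ∈ centralizer {(x : G)} ⊓ centralizer {(y : G)} := by
  simp only [Set.mem_inter_iff, SimpleGraph.mem_neighborSet, commGraph, mem_inf,
    mem_centralizer_singleton_iff]
  constructor
  · rintro ⟨⟨-, hx⟩, -, hy⟩
    exact ⟨hx.symm, hy.symm⟩
  · rintro ⟨hx, hy⟩
    refine ⟨⟨?_, hx.symm⟩, ?_, hy.symm⟩ <;> rintro rfl
    exacts [hxy hy, hxy hx.symm]

theorem commGraph_ncard_neighborSet_inter {x y : X} (hxy : (x : G) * y ≠ y * x) :
    ((commGraph G X).neighborSet x ∩ (commGraph G X).neighborSet y).ncard =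
      (X ∩ (centralizer {(x : G)} ⊓ centralizer {(y : G)} : Subgroup G)).ncard := by
  rw [← Set.ncard_image_of_injective _ Subtype.val_injective]
  congr 1
  ext g
  simp only [Set.mem_image, commGraph_mem_neighborSet_inter_iff hxy, Set.mem_inter_iff,
    SetLike.mem_coe]
  constructor
  · rintro ⟨t, ht, rfl⟩
    exact ⟨t.2, ht⟩
  · rintro ⟨hgX, hg⟩
    exact ⟨⟨g, hgX⟩, hg, rfl⟩

end CommGraph

section Transversal

variable {G : Type*} [Group G] {N H : Subgroup G} {T : Set G}

theorem eq_of_inv_mul_mem_of_existsUnique (hT : ∀ g : G, ∃! t, t ∈ T ∧ g⁻¹ * t ∈ N)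
    {t t' : G} (ht : t ∈ T) (ht' : t' ∈ T) (h : t⁻¹ * t' ∈ N) : t = t' :=
  (hT t).unique ⟨ht, by simp⟩ ⟨ht', h⟩

theorem ncard_sdiff_inter_eq_relIndex_sub_one (hT : ∀ g : G, ∃! t, t ∈ T ∧ g⁻¹ * t ∈ N)
    (hNH : N ≤ H) : (T \ N ∩ H).ncard = N.relIndex H - 1 := by
  have hcompl : ({((1 : H) : H ⧸ N.subgroupOf H)}ᶜ : Set _).ncard = N.relIndex H - 1 := by
    rw [Set.compl_eq_univ_sdiff, Set.ncard_sdiff_singleton_of_mem (Set.mem_univ _),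
      Set.ncard_univ, relIndex, index_eq_card]
  rw [← hcompl]
  refine Set.ncard_congr (fun t ht ↦ (⟨t, ht.2⟩ : H)) ?_ ?_ ?_
  · rintro t ⟨⟨-, htN⟩, -⟩
    rw [Set.mem_compl_singleton_iff, Ne, QuotientGroup.eq]
    simpa [mem_subgroupOf] using htN
  · intro t t' ht ht' h
    exact eq_of_inv_mul_mem_of_existsUnique hT ht.1.1 ht'.1.1
      (by simpa [mem_subgroupOf] using QuotientGroup.eq.mp h)
  · intro q hq
    obtain ⟨h, rfl⟩ := QuotientGroup.mk_surjective q
    obtain ⟨t, ⟨htT, hht⟩, -⟩ := hT h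
    have htH : t ∈ H := by simpa using H.mul_mem h.2 (hNH hht)
    have hmk : ((⟨t, htH⟩ : H) : H ⧸ N.subgroupOf H) = h :=
      QuotientGroup.eq.mpr (by simpa [mem_subgroupOf] using N.inv_mem hht)
    refine ⟨t, ⟨⟨htT, fun htN ↦ hq ?_⟩, htH⟩, hmk⟩
    rw [← hmk, Set.mem_singleton_iff, QuotientGroup.eq]
    simpa [mem_subgroupOf] using htN

end Transversal

theorem stmt4_general (G : Type*) [Group G]
    (T : Set G) (hT : IsCenterTransversal G T) (x y : ↥(T \ (Subgroup.center G : Set G))) (hne : x ≠ y) (hxy : ¬ (TGraph G T).Adj x y) :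
    ((TGraph G T).neighborSet x ∩ (TGraph G T).neighborSet y).ncard
      = (Subgroup.center G).relIndex
          (Subgroup.centralizer {(x : G)} ⊓ Subgroup.centralizer {(y : G)}) - 1 := by
  have hcomm : (x : G) * y ≠ y * x := fun h ↦ hxy ⟨hne, h⟩
  rw [TGraph, commGraph_ncard_neighborSet_inter hcomm]
  exact ncard_sdiff_inter_eq_relIndex_sub_one hT
    (le_inf (center_le_centralizer _) (center_le_centralizer _))

theorem stmt4 (G : Type*) [Group G] [Finite G] (hna : ∃ a b : G, a * b ≠ b * a)
    (T : Set G) (hT : IsCenterTransversal G T) (x y : ↥(T \ (Subgroup.center G : Set G))) (hne : x ≠ y) (hxy : ¬ (TGraph G T).Adj x y) :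
    ((TGraph G T).neighborSet x ∩ (TGraph G T).neighborSet y).ncard
      = (Subgroup.center G).relIndex
          (Subgroup.centralizer {(x : G)} ⊓ Subgroup.centralizer {(y : G)}) - 1 :=
  stmt4_general G T hT x y hne hxy
end

section
/- Let G be a finite non-abelian group. The graph T(G) is regular if and only if all non-central elements of G have centralizers of the same order, i.e., |cs(G)| = 2, where cs(G) is the set of conjugacy class sizes of G. -/
open scoped commutatorElement

open Pointwise Subgroup

/-! For `x ∈ T \ Z(G)` the centralizer `C(x)` contains `Z(G)`, so it is the disjoint union of the
cosets `t Z(G)` with `t ∈ T ∩ C(x)`; and `T ∩ C(x)` consists of `x`, the representative of `Z(G)`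
itself, and the neighbours of `x` in `T(G)`. Hence `|C(x)| = (deg x + 2) |Z(G)|`. Every non-central
element has the same centralizer as its representative in `T`, which lies in `T \ Z(G)`. -/

namespace Subgroup

variable {G : Type*} [Group G]

theorem centralizer_singleton_mul_of_mem_center {g z : G} (hz : z ∈ center G) :
    centralizer {g * z} = centralizer {g} := by
  ext h
  simp only [mem_centralizer_singleton_iff]
  rw [← mul_assoc, mul_assoc g, ← (mem_center_iff.mp hz h), ← mul_assoc]
  exact mul_left_inj z

theorem IsComplement.card_inter_mul_card {S : Set G} {H K : Subgroup G} (hS : IsComplement S H)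
    (hHK : H ≤ K) : Nat.card ↥(S ∩ K) * Nat.card H = Nat.card K := by
  let f : ↥(S ∩ K) × H → K := fun p => ⟨p.1 * p.2, mul_mem p.1.2.2 (hHK p.2.2)⟩
  have hf : Function.Bijective f := by
    refine ⟨fun p q hpq => ?_, fun k => ?_⟩
    · have := hS.1 (a₁ := (⟨p.1, p.1.2.1⟩, p.2)) (a₂ := (⟨q.1, q.1.2.1⟩, q.2))
        (congrArg Subtype.val hpq)
      simp only [Prod.mk.injEq, Subtype.mk.injEq] at this
      exact Prod.ext (Subtype.ext this.1) this.2
    · obtain ⟨⟨s, h⟩, hsh⟩ := hS.2 k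
      have hsK : (s : G) ∈ K := by
        rw [eq_mul_inv_of_mul_eq hsh]
        exact mul_mem k.2 (inv_mem (hHK h.2))
      exact ⟨(⟨s, s.2, hsK⟩, h), Subtype.ext hsh⟩
  rw [← Nat.card_prod]
  exact Nat.card_congr (Equiv.ofBijective f hf)

theorem IsComplement.card_inter_eq_one {S : Set G} {H : Subgroup G} [Finite H]
    (hS : IsComplement S H) : Nat.card ↥(S ∩ H) = 1 :=
  (Nat.mul_eq_right Nat.card_pos.ne').mp (hS.card_inter_mul_card le_rfl)

end Subgroup

section CommutingGraph

variable {G : Type*} [Group G]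

theorem IsCenterTransversal.isComplement {T : Set G} (hT : IsCenterTransversal G T) :
    IsComplement T (center G) := by
  refine isComplement_iff_existsUnique_inv_mul_mem.mpr fun g => ?_
  obtain ⟨t, ⟨htT, htg⟩, huniq⟩ := hT g
  refine ⟨⟨t, htT⟩, by simpa using inv_mem htg, fun s hs => Subtype.ext (huniq s ⟨s.2, ?_⟩)⟩
  simpa using inv_mem hs

theorem IsCenterTransversal.exists_centralizer_eq {T : Set G} (hT : IsCenterTransversal G T)
    {g : G} (hg : g ∉ center G) :
    ∃ t : ↥(T \ (center G : Set G)), centralizer {(t : G)} = centralizer {g} := by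
  obtain ⟨t, ⟨htT, hgt⟩, -⟩ := hT g
  have ht : t = g * (g⁻¹ * t) := by group
  refine ⟨⟨t, htT, fun htZ => hg ?_⟩, ?_⟩
  · simpa using mul_mem htZ (inv_mem hgt)
  · show centralizer {t} = _
    rw [ht, centralizer_singleton_mul_of_mem_center hgt]

theorem commGraph_image_neighborSet (X : Set G) (x : X) :
    Subtype.val '' (commGraph G X).neighborSet x
      = (X ∩ (centralizer {(x : G)} : Set G)) \ {(x : G)} := by
  ext g
  simp only [Set.mem_image, SimpleGraph.mem_neighborSet, commGraph, Set.mem_sdiff,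
    Set.mem_inter_iff, SetLike.mem_coe, mem_centralizer_singleton_iff, Set.mem_singleton_iff]
  constructor
  · rintro ⟨y, ⟨hxy, hcomm⟩, rfl⟩
    exact ⟨⟨y.2, hcomm.symm⟩, fun h => hxy (Subtype.ext h.symm)⟩
  · rintro ⟨⟨hgX, hcomm⟩, hgx⟩
    exact ⟨⟨g, hgX⟩, ⟨fun h => hgx (congrArg Subtype.val h).symm, hcomm.symm⟩, rfl⟩

theorem commGraph_ncard_neighborSet_add_one [Finite G] (X : Set G) (x : X) :
    ((commGraph G X).neighborSet x).ncard + 1 = (X ∩ (centralizer {(x : G)} : Set G)).ncard := by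
  rw [← Set.ncard_image_of_injective _ Subtype.val_injective, commGraph_image_neighborSet]
  exact Set.ncard_sdiff_singleton_add_one ⟨x.2, mem_centralizer_singleton_iff.mpr rfl⟩

variable [Finite G] {T : Set G}

theorem TGraph_ncard_neighborSet_add_two (hT : IsComplement T (center G))
    (x : ↥(T \ (center G : Set G))) :
    ((TGraph G T).neighborSet x).ncard + 2 = (T ∩ (centralizer {(x : G)} : Set G)).ncard := by
  have hcentral : T ∩ (centralizer {(x : G)} : Set G) ∩ center G = T ∩ center G := by
    rw [Set.inter_assoc, Set.inter_eq_right.mpr (center_le_centralizer _)]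
  have hone : (T ∩ (center G : Set G)).ncard = 1 := by
    rw [← Nat.card_coe_set_eq, hT.card_inter_eq_one]
  rw [← Set.ncard_inter_add_ncard_sdiff_eq_ncard _ (center G : Set G), hcentral, hone,
    Set.inter_sdiff_right_comm, ← commGraph_ncard_neighborSet_add_one, TGraph]
  omega

theorem card_centralizer_eq_ncard_neighborSet_add_two_mul (hT : IsComplement T (center G))
    (x : ↥(T \ (center G : Set G))) :
    Nat.card (centralizer {(x : G)})
      = (((TGraph G T).neighborSet x).ncard + 2) * Nat.card (center G) := by
  rw [TGraph_ncard_neighborSet_add_two hT, ← Nat.card_coe_set_eq,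
    hT.card_inter_mul_card (center_le_centralizer _)]

theorem TGraph_ncard_neighborSet_eq_iff (hT : IsComplement T (center G))
    (x y : ↥(T \ (center G : Set G))) :
    ((TGraph G T).neighborSet x).ncard = ((TGraph G T).neighborSet y).ncard ↔
      Nat.card (centralizer {(x : G)}) = Nat.card (centralizer {(y : G)}) := by
  rw [card_centralizer_eq_ncard_neighborSet_add_two_mul hT,
    card_centralizer_eq_ncard_neighborSet_add_two_mul hT, Nat.mul_left_inj Nat.card_pos.ne',
    Nat.add_right_cancel_iff]

end CommutingGraph

theorem stmt5_general (G : Type*) [Group G] [Finite G]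
    (T : Set G) (hT : IsCenterTransversal G T) :
    (∃ k, ∀ x : ↥(T \ (Subgroup.center G : Set G)), ((TGraph G T).neighborSet x).ncard = k) ↔
      ∀ x y : G, x ∉ Subgroup.center G → y ∉ Subgroup.center G →
        Nat.card (Subgroup.centralizer {x}) = Nat.card (Subgroup.centralizer {y}) := by
  have hS := hT.isComplement
  constructor
  · rintro ⟨k, hk⟩ x y hx hy
    obtain ⟨s, hs⟩ := hT.exists_centralizer_eq hx
    obtain ⟨t, ht⟩ := hT.exists_centralizer_eq hy
    rw [← hs, ← ht, ← TGraph_ncard_neighborSet_eq_iff hS, hk, hk]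
  · intro h
    by_cases hne : Nonempty ↥(T \ (center G : Set G))
    · obtain ⟨x₀⟩ := hne
      exact ⟨_, fun x => (TGraph_ncard_neighborSet_eq_iff hS x x₀).mpr (h _ _ x.2.2 x₀.2.2)⟩
    · exact ⟨0, fun x => (hne ⟨x⟩).elim⟩

theorem stmt5 (G : Type*) [Group G] [Finite G] (hna : ∃ a b : G, a * b ≠ b * a)
    (T : Set G) (hT : IsCenterTransversal G T) :
    (∃ k, ∀ x : ↥(T \ (Subgroup.center G : Set G)), ((TGraph G T).neighborSet x).ncard = k) ↔
      ∀ x y : G, x ∉ Subgroup.center G → y ∉ Subgroup.center G →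
        Nat.card (Subgroup.centralizer {x}) = Nat.card (Subgroup.centralizer {y}) :=
  stmt5_general G T hT
end

section
/- Let G be a finite non-abelian group such that T(G) is a connected strongly regular graph. Then for all non-central x, y ∈ G with x ∉ yZ(G), one has C_G(x) ≠ C_G(y). -/
open scoped commutatorElement

open Pointwise Subgroup

/-! If `C(x) = C(y)` for `x`, `y` in different cosets of `Z(G)`, their representatives `s ≠ t`
in `T` have the same closed neighbourhood in `T(G)`, since the closed neighbourhood of a vertex is
its centralizer and centralizers are constant on cosets of `Z(G)`. Adjacent vertices with equal
closed neighbourhoods have `k - 1` common neighbours, so `λ = k - 1`. But then every edge joins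
vertices with equal closed neighbourhoods, so a connected such graph is complete, against
`k < v - 1`. -/

namespace SimpleGraph

variable {V : Type*} (G : SimpleGraph V)

def closedNeighborSet (a : V) : Set V := insert a (G.neighborSet a)

variable {G}

theorem adj_of_closedNeighborSet_eq {a b : V} (hab : a ≠ b)
    (h : G.closedNeighborSet a = G.closedNeighborSet b) : G.Adj a b := by
  have : a ∈ G.closedNeighborSet b := h ▸ Set.mem_insert a _
  exact (this.resolve_left hab).symm

theorem neighborSet_inter_eq_sdiff_of_closedNeighborSet_eq {a b : V}
    (h : G.closedNeighborSet a = G.closedNeighborSet b) :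
    G.neighborSet a ∩ G.neighborSet b = G.neighborSet a \ {b} := by
  ext u
  refine ⟨fun ⟨hua, hub⟩ => ⟨hua, fun hu => G.loopless.irrefl b (hu ▸ hub)⟩,
    fun ⟨hua, hu⟩ => ⟨hua, ?_⟩⟩
  have : u ∈ G.closedNeighborSet b := h ▸ Set.mem_insert_of_mem a hua
  exact this.resolve_left hu

theorem closedNeighborSet_subset_of_adj {a c : V} (hadj : G.Adj a c)
    (hfin : (G.neighborSet a).Finite)
    (hcard : (G.neighborSet a).ncard ≤ (G.neighborSet a ∩ G.neighborSet c).ncard + 1) :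
    G.closedNeighborSet a ⊆ G.closedNeighborSet c := by
  have hsub : G.neighborSet a ∩ G.neighborSet c ⊆ G.neighborSet a \ {c} :=
    fun u ⟨hua, huc⟩ => ⟨hua, fun hu => G.loopless.irrefl c (hu ▸ huc)⟩
  have heq : G.neighborSet a ∩ G.neighborSet c = G.neighborSet a \ {c} := by
    refine Set.eq_of_subset_of_ncard_le hsub ?_ hfin.sdiff
    have := Set.ncard_sdiff_singleton_add_one (s := G.neighborSet a) hadj hfin
    omega
  rintro u (rfl | hu)
  · exact Set.mem_insert_of_mem c hadj.symm
  · by_cases huc : u = c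
    · exact huc ▸ Set.mem_insert u _
    · have : u ∈ G.neighborSet a ∩ G.neighborSet c := heq ▸ ⟨hu, huc⟩
      exact Set.mem_insert_of_mem c this.2

theorem Preconnected.closedNeighborSet_eq_univ (hc : G.Preconnected)
    (h : ∀ a b, G.Adj a b → G.closedNeighborSet a = G.closedNeighborSet b) (a : V) :
    G.closedNeighborSet a = Set.univ := by
  refine Set.eq_univ_of_forall fun b => ?_
  have hab : G.closedNeighborSet a = G.closedNeighborSet b := by
    obtain ⟨p⟩ := hc a b
    induction p with
    | nil => rfl
    | cons hadj _ ih => exact (h _ _ hadj).trans ih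
  exact hab ▸ Set.mem_insert b _

end SimpleGraph

open SimpleGraph

namespace IsSRG

variable {V : Type*} {G : SimpleGraph V} {v k l m : ℕ}

theorem finite_neighborSet (hG : IsSRG G v k l m) (a : V) : (G.neighborSet a).Finite :=
  Set.finite_of_ncard_pos (hG.2.2.2.1 a ▸ hG.2.1)

theorem lambda_add_one_ne (hG : IsSRG G v k l m) (hc : G.Connected) : l + 1 ≠ k := by
  intro hlk
  have hfin := hG.finite_neighborSet
  obtain ⟨hv, -, hkv, hdeg, hlam, -⟩ := hG
  have hcard : ∀ a b, G.Adj a b →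
      (G.neighborSet a).ncard ≤ (G.neighborSet a ∩ G.neighborSet b).ncard + 1 :=
    fun a b hab => by rw [hlam a b hab, hdeg a, hlk]
  have htwins : ∀ a b, G.Adj a b → G.closedNeighborSet a = G.closedNeighborSet b :=
    fun a b hab =>
      (closedNeighborSet_subset_of_adj hab (hfin a) (hcard a b hab)).antisymm
        (closedNeighborSet_subset_of_adj hab.symm (hfin b) (hcard b a hab.symm))
  obtain ⟨a⟩ := hc.nonempty
  have : v ≤ k + 1 :=
    calc v = (Set.univ : Set V).ncard := by rw [Set.ncard_univ, hv]
      _ = (G.closedNeighborSet a).ncard := by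
        rw [hc.preconnected.closedNeighborSet_eq_univ htwins a]
      _ ≤ k + 1 := hdeg a ▸ Set.ncard_insert_le a _
  omega

theorem closedNeighborSet_ne (hG : IsSRG G v k l m) (hc : G.Connected) {a b : V}
    (hab : a ≠ b) : G.closedNeighborSet a ≠ G.closedNeighborSet b := by
  intro h
  have hadj := adj_of_closedNeighborSet_eq hab h
  apply hG.lambda_add_one_ne hc
  rw [← hG.2.2.2.2.1 a b hadj, ← hG.2.2.2.1 a,
    neighborSet_inter_eq_sdiff_of_closedNeighborSet_eq h]
  exact Set.ncard_sdiff_singleton_add_one hadj (hG.finite_neighborSet a)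

end IsSRG

theorem Subgroup.mem_iff_of_inv_mul_mem {G : Type*} [Group G] {H : Subgroup G} {x s : G}
    (h : x⁻¹ * s ∈ H) : s ∈ H ↔ x ∈ H :=
  ⟨fun hs => by simpa using mul_mem hs (inv_mem h), fun hx => by simpa using mul_mem hx h⟩

theorem Subgroup.centralizer_singleton_eq_of_inv_mul_mem_center {G : Type*} [Group G] {x s : G}
    (h : x⁻¹ * s ∈ center G) : centralizer {s} = centralizer {x} := by
  obtain ⟨z, hz, rfl⟩ : ∃ z ∈ center G, s = x * z :=
    ⟨_, h, (mul_inv_cancel_left x s).symm⟩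
  ext g
  rw [mem_centralizer_singleton_iff, mem_centralizer_singleton_iff, ← mul_assoc, mul_assoc x,
    ← mem_center_iff.mp hz g, ← mul_assoc, mul_left_inj]

theorem commGraph_closedNeighborSet {G : Type*} [Group G] {X : Set G} (a : X) :
    (commGraph G X).closedNeighborSet a = Subtype.val ⁻¹' (centralizer {(a : G)} : Set G) := by
  ext u
  simp only [closedNeighborSet, Set.mem_insert_iff, SimpleGraph.mem_neighborSet, commGraph,
    Set.mem_preimage, SetLike.mem_coe, mem_centralizer_singleton_iff]
  by_cases hua : u = a
  · simp [hua]
  · simp [hua, Ne.symm hua, eq_comm]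

theorem stmt9_general (G : Type*) [Group G]
    (T : Set G) (hT : IsCenterTransversal G T) (hconn : (TGraph G T).Connected)
    (hsrg : ∃ v k l m, IsSRG (TGraph G T) v k l m) :
    ∀ x y : G, x ∉ Subgroup.center G → y ∉ Subgroup.center G →
      x ∉ y • (Subgroup.center G : Set G) →
      Subgroup.centralizer {x} ≠ Subgroup.centralizer {y} := by
  intro x y hx hy hxy hcent
  obtain ⟨v, k, l, m, hS⟩ := hsrg
  obtain ⟨s, ⟨hsT, hxs⟩, -⟩ := hT x
  obtain ⟨t, ⟨htT, hyt⟩, -⟩ := hT y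
  have hst : s ≠ t := by
    rintro rfl
    exact hxy ((mem_leftCoset_iff y).mpr (QuotientGroup.eq.mp
      ((QuotientGroup.eq.mpr hyt).trans (QuotientGroup.eq.mpr hxs).symm)))
  refine hS.closedNeighborSet_ne hconn
    (a := ⟨s, hsT, (mem_iff_of_inv_mul_mem hxs).not.mpr hx⟩)
    (b := ⟨t, htT, (mem_iff_of_inv_mul_mem hyt).not.mpr hy⟩)
    (fun h => hst (congrArg Subtype.val h)) ?_
  rw [TGraph, commGraph_closedNeighborSet, commGraph_closedNeighborSet,
    centralizer_singleton_eq_of_inv_mul_mem_center hxs,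
    centralizer_singleton_eq_of_inv_mul_mem_center hyt, hcent]

theorem stmt9 (G : Type*) [Group G] [Finite G] (hna : ∃ a b : G, a * b ≠ b * a)
    (T : Set G) (hT : IsCenterTransversal G T) (hconn : (TGraph G T).Connected)
    (hsrg : ∃ v k l m, IsSRG (TGraph G T) v k l m) :
    ∀ x y : G, x ∉ Subgroup.center G → y ∉ Subgroup.center G →
      x ∉ y • (Subgroup.center G : Set G) →
      Subgroup.centralizer {x} ≠ Subgroup.centralizer {y} :=
  stmt9_general G T hT hconn hsrg
end

section
/- Let p be an odd prime and G a finite non-abelian p-group. If T(G) is strongly regular, then T(G) is disconnected. -/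
open scoped commutatorElement

open Pointwise Subgroup

/-!
Let `x` be a vertex of `T(G)`. Every element of `G` has odd order, so `x` is a power of `x²`;
hence the representative `s ∈ T` of the coset `x² Z(G)` is again a vertex, `s ≠ x`, and every
element commuting with `x` commutes with `s`. So all neighbours of `x` other than `s` are
neighbours of `s`, i.e. `λ = k - 1`. In a `k`-regular graph with `λ = k - 1` every closed
neighbourhood is closed under adjacency, so each component is a clique `K_{k+1}`, whereas
`k + 1 < v`.
-/

theorem IsPGroup.mem_of_sq_mem {p : ℕ} (hodd : Odd p) {G : Type*} [Group G]
    (hpG : IsPGroup p G) {H : Subgroup G} {g : G} (hg : g ^ 2 ∈ H) : g ∈ H := by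
  obtain ⟨n, hn⟩ := hpG g
  have hcop : Nat.Coprime 2 (orderOf g) :=
    Nat.coprime_two_left.2 ((hodd.pow (n := n)).of_dvd_nat (orderOf_dvd_of_pow_eq_one hn))
  obtain ⟨m, hm⟩ := exists_pow_eq_self_of_coprime hcop
  exact hm ▸ H.pow_mem hg m

namespace SimpleGraph

variable {V : Type*} {G : SimpleGraph V} {x y : V}

theorem ncard_neighborSet_inter_eq_sub_one_iff [Finite V] (hxy : G.Adj x y) :
    (G.neighborSet x ∩ G.neighborSet y).ncard = (G.neighborSet x).ncard - 1 ↔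
      G.neighborSet x \ {y} ⊆ G.neighborSet y := by
  have hsub : G.neighborSet x ∩ G.neighborSet y ⊆ G.neighborSet x \ {y} :=
    fun u ⟨hxu, hyu⟩ => ⟨hxu, by rintro rfl; exact G.irrefl hyu⟩
  rw [← Set.ncard_sdiff_singleton_of_mem (s := G.neighborSet x) hxy]
  constructor
  · intro h
    rw [← Set.eq_of_subset_of_ncard_le hsub h.ge]
    exact Set.inter_subset_right
  · intro h
    rw [hsub.antisymm fun u hu => ⟨hu.1, h hu⟩]

theorem eq_or_adj_of_reachable [Finite V] {k : ℕ}
    (hdeg : ∀ x, (G.neighborSet x).ncard = k)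
    (hcommon : ∀ x y, G.Adj x y → (G.neighborSet x ∩ G.neighborSet y).ncard = k - 1)
    (h : G.Reachable x y) : x = y ∨ G.Adj x y := by
  obtain ⟨w⟩ := h
  induction w with
  | nil => exact Or.inl rfl
  | @cons a b c hab _ ih =>
    rcases ih with rfl | hbc
    · exact Or.inr hab
    by_cases hca : c = a
    · exact Or.inl hca.symm
    have hsub := (ncard_neighborSet_inter_eq_sub_one_iff hab.symm).1
      (by rw [hdeg]; exact hcommon b a hab.symm)
    exact Or.inr (hsub ⟨hbc, hca⟩)

end SimpleGraph

open SimpleGraph in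
theorem IsSRG.not_connected_of_neighborSet_diff_subset {V : Type*} {G : SimpleGraph V}
    {v k l m : ℕ} (hsrg : IsSRG G v k l m) {x y : V} (hxy : G.Adj x y)
    (hsub : G.neighborSet x \ {y} ⊆ G.neighborSet y) : ¬ G.Connected := by
  obtain ⟨hv, -, hkv, hdeg, hl, -⟩ := hsrg
  have : Finite V := Nat.finite_of_card_ne_zero (by omega)
  have hlk : l = k - 1 := by
    rw [← hl x y hxy, (ncard_neighborSet_inter_eq_sub_one_iff hxy).2 hsub, hdeg]
  intro hconn
  have hnbhd : G.neighborSet x = {x}ᶜ := Set.ext fun u =>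
    ⟨fun hxu => hxu.ne.symm,
      fun hux => (eq_or_adj_of_reachable hdeg (hlk ▸ hl) (hconn x u)).resolve_left (Ne.symm hux)⟩
  have := hdeg x
  rw [hnbhd, Set.ncard_compl, Set.ncard_singleton] at this
  omega

theorem TGraph.exists_adj_neighborSet_diff_subset {p : ℕ} (hodd : Odd p) {G : Type*} [Group G]
    (hpG : IsPGroup p G) {T : Set G} (hT : IsCenterTransversal G T)
    (x : ↥(T \ (center G : Set G))) :
    ∃ y, (TGraph G T).Adj x y ∧
      (TGraph G T).neighborSet x \ {y} ⊆ (TGraph G T).neighborSet y := by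
  obtain ⟨-, hxZ⟩ := x.2
  obtain ⟨s, ⟨hsT, hsZ⟩, -⟩ := hT ((x : G) ^ 2)
  have hs : s = (x : G) ^ 2 * (((x : G) ^ 2)⁻¹ * s) := (mul_inv_cancel_left _ _).symm
  have hs_nc : s ∉ center G := fun h =>
    hxZ (hpG.mem_of_sq_mem hodd (by simpa using mul_mem h (inv_mem hsZ)))
  have hsx : s ≠ x := by
    rintro rfl
    refine hxZ (inv_mem_iff.1 ?_)
    rwa [pow_two, mul_inv_rev, inv_mul_cancel_right] at hsZ
  have hcomm : ∀ u : G, Commute u x → Commute u s := fun u hu =>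
    hs ▸ (hu.pow_right 2).mul_right (mem_center_iff.1 hsZ u)
  refine ⟨⟨s, hsT, hs_nc⟩, ⟨fun h => hsx (congrArg Subtype.val h).symm, hcomm x rfl⟩, ?_⟩
  rintro u ⟨⟨-, hxu⟩, hus⟩
  exact ⟨fun h => hus h.symm, (hcomm u hxu.symm).symm⟩

theorem stmt10_general (p : ℕ) (hodd : Odd p)
    (G : Type*) [Group G] (hpG : IsPGroup p G)
    (T : Set G) (hT : IsCenterTransversal G T) (hsrg : ∃ v k l m, IsSRG (TGraph G T) v k l m) :
    ¬ (TGraph G T).Connected := by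
  obtain ⟨v, k, l, m, hsrg⟩ := hsrg
  intro hconn
  obtain ⟨x⟩ := hconn.nonempty
  obtain ⟨y, hxy, hsub⟩ := TGraph.exists_adj_neighborSet_diff_subset hodd hpG hT x
  exact hsrg.not_connected_of_neighborSet_diff_subset hxy hsub hconn

theorem stmt10 (p : ℕ) (hp : p.Prime) (hodd : Odd p)
    (G : Type*) [Group G] [Finite G] (hpG : IsPGroup p G) (hna : ∃ a b : G, a * b ≠ b * a)
    (T : Set G) (hT : IsCenterTransversal G T) (hsrg : ∃ v k l m, IsSRG (TGraph G T) v k l m) :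
    ¬ (TGraph G T).Connected :=
  stmt10_general p hodd G hpG T hT hsrg
end

section
/- Let G be a finite non-abelian 2-group such that T(G) is a connected strongly regular graph with parameters (v,k,λ,μ), and suppose |C_G(x) ∩ C_G(y)| is the same for all pairs of distinct vertices x ≠ y of T(G). Then G has conjugate type {1,2}, i.e., [G : C_G(x)] = 2 for every non-central x ∈ G. -/
open scoped commutatorElement

open Pointwise Subgroup

/-!
Let `Z` be the centre. Every subgroup `H ≥ Z` has order `|Z|` times the number of elements of `T`
in `H`, and exactly one element of `T` is central; so `k`-regularity of `T(G)` gives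
`|C(u)| = (k + 2)|Z|` for every vertex `u`, and the hypothesis on `|C(x) ∩ C(y)|` says that the
number `M` of vertices commuting with both `x` and `y` does not depend on `y ≠ x`. Counting the
pairs `(y, w)` of vertices with `w` commuting with `x` and with `y` gives `(v - 1)M = (k + 1)k`.
In a `2`-group, `k + 2`, `M + 1` and `i = [G : C(x)]` are powers of `2` with `M + 1 ∣ k + 2` and
`v + 1 = [G : Z] = i(k + 2)`; reading the equation modulo `2(k + 2)` forces `M + 1 = (k + 2)/2`,
and then `i = 2`.
-/

theorem eq_one_of_two_pow_add_sub_two_mul_eq {a b e : ℕ} (hb : 2 ≤ b) (hab : a ≤ b) (he : 1 ≤ e)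
    (h : ((2 : ℤ) ^ (e + b) - 2) * (2 ^ a - 1) = (2 ^ b - 1) * (2 ^ b - 2)) : e = 1 := by
  obtain ⟨b, rfl⟩ : ∃ b', b = b' + 2 := ⟨b - 2, by omega⟩
  obtain ⟨e, rfl⟩ : ∃ e', e = e' + 1 := ⟨e - 1, by omega⟩
  have hdvd : (2 : ℤ) ^ (b + 3) ∣ 2 ^ (a + 1) - 2 ^ (b + 2) :=
    ⟨2 ^ e * (2 ^ a - 1) - 2 ^ (b + 1) + 1, by linear_combination -h⟩
  have hlt : |(2 : ℤ) ^ (a + 1) - 2 ^ (b + 2)| < 2 ^ (b + 3) := by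
    have : (2 : ℤ) ^ (a + 1) ≤ 2 ^ (b + 3) := pow_le_pow_right₀ (by norm_num) (by omega)
    have : (2 : ℤ) ^ (b + 3) = 2 * 2 ^ (b + 2) := by ring
    rw [abs_sub_lt_iff]
    constructor <;> linarith [pow_pos (two_pos : (0 : ℤ) < 2) (a + 1)]
  obtain rfl : a = b + 1 := by
    have := sub_eq_zero.mp (Int.eq_zero_of_abs_lt_dvd hdvd hlt)
    have := Nat.pow_right_injective le_rfl (by exact_mod_cast this : 2 ^ (a + 1) = 2 ^ (b + 2))
    omega
  have ha : (2 : ℤ) ^ (b + 1) - 1 ≠ 0 := by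
    have : (2 : ℤ) ^ (b + 1) = 2 * 2 ^ b := by ring
    linarith [pow_pos (two_pos : (0 : ℤ) < 2) b]
  have : ((2 : ℤ) ^ (e + 1 + (b + 2)) - 2 ^ (b + 3)) * (2 ^ (b + 1) - 1) = 0 := by
    linear_combination h
  have := sub_eq_zero.mp ((mul_eq_zero.mp this).resolve_right ha)
  have := Nat.pow_right_injective le_rfl
    (by exact_mod_cast this : 2 ^ (e + 1 + (b + 2)) = 2 ^ (b + 3))
  omega

theorem eq_two_of_mul_dvd_two_pow {i k M n : ℕ} (hn : i * (k + 2) ∣ 2 ^ n)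
    (hM : M + 1 ∣ k + 2) (hi : i ≠ 1) (hk : 0 < k) (h : (i * (k + 2) - 2) * M = (k + 1) * k) :
    i = 2 := by
  obtain ⟨e, -, rfl⟩ := (Nat.dvd_prime_pow Nat.prime_two).1 (dvd_of_mul_right_dvd hn)
  obtain ⟨b, -, hb⟩ := (Nat.dvd_prime_pow Nat.prime_two).1 (dvd_of_mul_left_dvd hn)
  obtain ⟨a, hab, ha⟩ := (Nat.dvd_prime_pow Nat.prime_two).1 (hb ▸ hM)
  have he : 1 ≤ e := Nat.one_le_iff_ne_zero.2 (by rintro rfl; exact hi rfl)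
  have hb2 : 2 ≤ b := by
    by_contra! hb2
    have : 2 ^ b ≤ 2 ^ 1 := Nat.pow_le_pow_right two_pos (by omega)
    omega
  have h2 : 2 ≤ 2 ^ e * (k + 2) := le_mul_of_one_le_of_le Nat.one_le_two_pow (by omega)
  zify [h2] at h
  obtain rfl := eq_one_of_two_pow_add_sub_two_mul_eq hb2 hab he <| by
    rw [pow_add, (by exact_mod_cast hb.symm : (2 : ℤ) ^ b = k + 2),
      (by exact_mod_cast ha.symm : (2 : ℤ) ^ a = M + 1)]
    linear_combination h
  rfl

theorem card_sub_one_mul_add_eq_mul_self_of_symm {V : Type*} [Finite V] {R : V → V → Prop}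
    (hR : ∀ a b, R a b → R b a) {c d : ℕ} (hd : ∀ w, {y | R w y}.ncard = d) (x : V)
    (hc : ∀ y ≠ x, {w | R x w ∧ R y w}.ncard = c) : (Nat.card V - 1) * c + d = d * d := by
  classical
  have := Fintype.ofFinite V
  simp only [Set.ncard_eq_toFinset_card', Set.toFinset_ofPred] at hd hc
  have hbelow (w : V) : (Finset.bipartiteBelow R Finset.univ w).card = d := by
    rw [← hd w, Finset.bipartiteBelow, Finset.filter_congr fun y _ => ⟨hR y w, hR w y⟩]
  have hcount := Finset.sum_card_bipartiteAbove_eq_sum_card_bipartiteBelow R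
    (s := Finset.univ) (t := {w | R x w})
  rw [Finset.sum_const_nat fun w _ => hbelow w, hd x,
    ← Finset.add_sum_erase _ _ (Finset.mem_univ x), Finset.sum_const_nat fun y hy => ?_] at hcount
  · simpa [Finset.bipartiteAbove, Finset.filter_filter, Finset.card_erase_of_mem,
      Nat.card_eq_fintype_card, hd x, add_comm] using hcount
  · rw [Finset.bipartiteAbove, Finset.filter_filter]
    exact hc y (Finset.ne_of_mem_erase hy)

theorem Subgroup.centralizer_singleton_mul_of_mem_center_s12 {G : Type*} [Group G] {x c : G}
    (hc : c ∈ center G) : centralizer {x * c} = centralizer {x} := by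
  ext g
  rw [mem_centralizer_singleton_iff, mem_centralizer_singleton_iff, ← mul_assoc,
    mul_assoc x, ← mem_center_iff.mp hc g, ← mul_assoc, mul_left_inj]

theorem insert_commGraph_neighborSet {G : Type*} [Group G] {X : Set G} (u : X) :
    insert u ((commGraph G X).neighborSet u) = {w : X | (w : G) ∈ centralizer {(u : G)}} := by
  ext w
  simp only [Set.mem_insert_iff, SimpleGraph.mem_neighborSet, commGraph, Set.mem_ofPred_eq,
    mem_centralizer_singleton_iff]
  by_cases h : w = u
  · simp [h]
  · simp [h, Ne.symm h, eq_comm]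

namespace IsCenterTransversal

variable {G : Type*} [Group G] {T : Set G}

theorem eq_of_inv_mul_mem_center (hT : IsCenterTransversal G T) {t₁ t₂ : G} (h₁ : t₁ ∈ T)
    (h₂ : t₂ ∈ T) (h : t₁⁻¹ * t₂ ∈ center G) : t₁ = t₂ :=
  (hT t₁).unique ⟨h₁, by simp [(center G).one_mem]⟩ ⟨h₂, h⟩

theorem ncard_inter_mul_card_center [Finite G] (hT : IsCenterTransversal G T) {H : Subgroup G}
    (hZH : center G ≤ H) : (T ∩ H).ncard * Nat.card (center G) = Nat.card H := by
  let f : ↥(T ∩ H) × center G → H := fun p => ⟨p.1 * p.2, H.mul_mem p.1.2.2 (hZH p.2.2)⟩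
  have hf : Function.Bijective f := by
    refine ⟨fun ⟨⟨t₁, ht₁⟩, z₁⟩ ⟨⟨t₂, ht₂⟩, z₂⟩ h => ?_, fun ⟨g, hg⟩ => ?_⟩
    · have h' : t₁ * z₁ = t₂ * z₂ := congrArg Subtype.val h
      obtain rfl : t₁ = t₂ := hT.eq_of_inv_mul_mem_center ht₁.1 ht₂.1 <| by
        rw [show t₁⁻¹ * t₂ = z₁ * (z₂ : G)⁻¹ by
          rw [inv_mul_eq_iff_eq_mul, ← mul_assoc, h', mul_inv_cancel_right]]
        exact mul_mem z₁.2 (inv_mem z₂.2)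
      obtain rfl : z₁ = z₂ := Subtype.ext (mul_left_cancel h')
      rfl
    · obtain ⟨t, ⟨htT, htZ⟩, -⟩ := hT g
      have htH : t ∈ H := by simpa using H.mul_mem hg (hZH htZ)
      refine ⟨(⟨t, htT, htH⟩, ⟨t⁻¹ * g, by simpa using inv_mem htZ⟩), Subtype.ext ?_⟩
      simp [f]
  rw [← Nat.card_coe_set_eq, ← Nat.card_prod, Nat.card_eq_of_bijective f hf]

theorem ncard_inter_eq [Finite G] (hT : IsCenterTransversal G T) {H : Subgroup G}
    (hZH : center G ≤ H) :
    (T ∩ H).ncard = {w : ↥(T \ (center G : Set G)) | (w : G) ∈ H}.ncard + 1 := by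
  obtain ⟨t₀, ⟨ht₀T, ht₀Z⟩, -⟩ := hT 1
  rw [inv_one, one_mul] at ht₀Z
  have hTH :
      T ∩ H = insert t₀ (Subtype.val '' {w : ↥(T \ (center G : Set G)) | (w : G) ∈ H}) := by
    ext g
    refine ⟨fun ⟨hgT, hgH⟩ => ?_, ?_⟩
    · by_cases hgZ : g ∈ center G
      · exact Or.inl (hT.eq_of_inv_mul_mem_center ht₀T hgT (mul_mem (inv_mem ht₀Z) hgZ)).symm
      · exact Or.inr ⟨⟨g, hgT, hgZ⟩, hgH, rfl⟩
    · rintro (rfl | ⟨w, hw, rfl⟩)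
      exacts [⟨ht₀T, hZH ht₀Z⟩, ⟨w.2.1, hw⟩]
  rw [hTH, Set.ncard_insert_of_notMem (by rintro ⟨w, -, rfl⟩; exact w.2.2 ht₀Z) (Set.toFinite _),
    Set.ncard_image_of_injective _ Subtype.val_injective]

theorem card_subgroup_eq [Finite G] (hT : IsCenterTransversal G T) {H : Subgroup G}
    (hZH : center G ≤ H) :
    Nat.card H =
      ({w : ↥(T \ (center G : Set G)) | (w : G) ∈ H}.ncard + 1) * Nat.card (center G) := by
  rw [← hT.ncard_inter_mul_card_center hZH, hT.ncard_inter_eq hZH]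

theorem card_eq [Finite G] (hT : IsCenterTransversal G T) :
    Nat.card G = (Nat.card ↥(T \ (center G : Set G)) + 1) * Nat.card (center G) := by
  rw [← card_top (G := G), hT.card_subgroup_eq le_top]
  simp only [mem_top, Set.ofPred_true, Set.ncard_univ]

theorem exists_centralizer_eq_s12 (hT : IsCenterTransversal G T) {x : G} (hx : x ∉ center G) :
    ∃ u : ↥(T \ (center G : Set G)), centralizer {x} = centralizer {(u : G)} := by
  obtain ⟨t, ⟨htT, htZ⟩, -⟩ := hT x
  refine ⟨⟨t, htT, fun h => hx ?_⟩, ?_⟩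
  · simpa using mul_mem h (inv_mem htZ)
  · exact (centralizer_singleton_mul_of_mem_center_s12 htZ).symm.trans (by rw [mul_inv_cancel_left])

end IsCenterTransversal

section RegularTGraph

variable {G : Type*} [Group G] [Finite G] {T : Set G} {k : ℕ}

theorem ncard_setOf_mem_centralizer (hreg : ∀ u, ((TGraph G T).neighborSet u).ncard = k)
    (u : ↥(T \ (center G : Set G))) :
    {w : ↥(T \ (center G : Set G)) | (w : G) ∈ centralizer {(u : G)}}.ncard = k + 1 := by
  rw [← insert_commGraph_neighborSet, Set.ncard_insert_of_notMem
    (SimpleGraph.notMem_neighborSet_self _) (Set.toFinite _)]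
  exact congrArg (· + 1) (hreg u)

theorem card_centralizer_eq (hT : IsCenterTransversal G T)
    (hreg : ∀ u, ((TGraph G T).neighborSet u).ncard = k) (u : ↥(T \ (center G : Set G))) :
    Nat.card (centralizer {(u : G)}) = (k + 2) * Nat.card (center G) := by
  rw [hT.card_subgroup_eq (center_le_centralizer _), ncard_setOf_mem_centralizer hreg]

theorem index_centralizer_mul (hT : IsCenterTransversal G T)
    (hreg : ∀ u, ((TGraph G T).neighborSet u).ncard = k) (u : ↥(T \ (center G : Set G))) :
    (centralizer {(u : G)}).index * (k + 2) = Nat.card ↥(T \ (center G : Set G)) + 1 := by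
  have h := (centralizer {(u : G)}).index_mul_card
  rw [card_centralizer_eq hT hreg, hT.card_eq, ← mul_assoc] at h
  exact Nat.eq_of_mul_eq_mul_right Nat.card_pos h

theorem card_sub_one_mul_eq_of_ncard_inf_centralizer_eq
    (hreg : ∀ u, ((TGraph G T).neighborSet u).ncard = k) (x : ↥(T \ (center G : Set G)))
    {M : ℕ} (hM : ∀ y ≠ x, {w : ↥(T \ (center G : Set G)) |
      (w : G) ∈ centralizer {(x : G)} ⊓ centralizer {(y : G)}}.ncard = M) :
    (Nat.card ↥(T \ (center G : Set G)) - 1) * M = (k + 1) * k := by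
  have h := card_sub_one_mul_add_eq_mul_self_of_symm
    (fun a b => by simp only [mem_centralizer_singleton_iff]; exact Eq.symm)
    (ncard_setOf_mem_centralizer hreg) x hM
  linarith

end RegularTGraph

theorem stmt12_general (G : Type*) [Group G] [Finite G] (h2 : IsPGroup 2 G)
    (T : Set G) (hT : IsCenterTransversal G T) (v k l m : ℕ)
    (hsrg : IsSRG (TGraph G T) v k l m)
    (hconst : ∀ x y t w : ↥(T \ (Subgroup.center G : Set G)), x ≠ y → t ≠ w →
      Nat.card (Subgroup.centralizer {(x : G)} ⊓ Subgroup.centralizer {(y : G)} : Subgroup G)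
        = Nat.card (Subgroup.centralizer {(t : G)} ⊓ Subgroup.centralizer {(w : G)} : Subgroup G)) :
    ∀ x : G, x ∉ Subgroup.center G → (Subgroup.centralizer {x}).index = 2 := by
  intro x hx
  obtain ⟨hv, hk, hkv, hreg, -, -⟩ := hsrg
  obtain ⟨x₀, hx₀⟩ := hT.exists_centralizer_eq_s12 hx
  have : Nontrivial ↥(T \ (center G : Set G)) := Finite.one_lt_card_iff_nontrivial.1 (by omega)
  obtain ⟨y₁, hy₁⟩ := exists_ne x₀
  have hZ (y : ↥(T \ (center G : Set G))) :
      center G ≤ centralizer {(x₀ : G)} ⊓ centralizer {(y : G)} :=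
    le_inf (center_le_centralizer _) (center_le_centralizer _)
  have hcount := card_sub_one_mul_eq_of_ncard_inf_centralizer_eq hreg x₀ fun y hy => by
    have h := hconst x₀ y x₀ y₁ hy.symm hy₁.symm
    rw [hT.card_subgroup_eq (hZ y), hT.card_subgroup_eq (hZ y₁)] at h
    exact Nat.succ_injective (Nat.eq_of_mul_eq_mul_right Nat.card_pos h)
  have hdvd := card_dvd_of_le (inf_le_left : centralizer {(x₀ : G)} ⊓ centralizer {(y₁ : G)} ≤ _)
  rw [hT.card_subgroup_eq (hZ y₁), card_centralizer_eq hT hreg] at hdvd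
  have hindex := index_centralizer_mul hT hreg x₀
  obtain ⟨n, hn⟩ := IsPGroup.iff_card.1 h2
  rw [hx₀]
  refine eq_two_of_mul_dvd_two_pow (n := n) ?_ (Nat.dvd_of_mul_dvd_mul_right Nat.card_pos hdvd)
    ?_ hk (by rw [hindex]; convert hcount using 2; omega)
  · rw [hindex, ← hn, hT.card_eq]
    exact dvd_mul_right _ _
  · rw [Ne, index_eq_one, centralizer_eq_top_iff_subset, Set.singleton_subset_iff]
    exact x₀.2.2

theorem stmt12 (G : Type*) [Group G] [Finite G] (h2 : IsPGroup 2 G) (hna : ∃ a b : G, a * b ≠ b * a)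
    (T : Set G) (hT : IsCenterTransversal G T) (v k l m : ℕ)
    (hsrg : IsSRG (TGraph G T) v k l m) (hconn : (TGraph G T).Connected)
    (hconst : ∀ x y t w : ↥(T \ (Subgroup.center G : Set G)), x ≠ y → t ≠ w →
      Nat.card (Subgroup.centralizer {(x : G)} ⊓ Subgroup.centralizer {(y : G)} : Subgroup G)
        = Nat.card (Subgroup.centralizer {(t : G)} ⊓ Subgroup.centralizer {(w : G)} : Subgroup G)) :
    ∀ x : G, x ∉ Subgroup.center G → (Subgroup.centralizer {x}).index = 2 :=
  stmt12_general G h2 T hT v k l m hsrg hconst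
end

section
/- There is no strongly regular graph with parameters (2^{2s+1} − 1, 2^{s+1} − 2, 2^s − 3, 1) for any integer s ≥ 2. -/
open scoped commutatorElement

open Pointwise Subgroup

/-!
The adjacency matrix `A` of an SRG `(n, k, λ, μ)` satisfies `A² - (λ - μ) A - (k - μ) I = μ J`
and `A J = k J`, so every eigenvalue of `A` is `k` or a root `θ, τ` of `x² - (λ - μ) x - (k - μ)`,
whose discriminant is `Δ = (λ - μ)² + 4 (k - μ)`. As `tr A = 0`, the multiplicities satisfy
`a k + b θ + c τ = 0` and `a + b + c = n`. If `b ≠ c` this writes `θ - τ = √Δ` as a rational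
number; if `b = c` it reads `a k + b (λ - μ) = 0`. Here `Δ = 4 (4^(s-1) + 1)` is not a rational
square, while `b = c` forces `a = 0` and `n = 2 b`, although `n = 2^(2s+1) - 1` is odd.
-/

section

open Polynomial Matrix

theorem Multiset.exists_sum_eq_nsmul_add_nsmul_add_nsmul {M : Type*} [AddCommMonoid M]
    {s : Multiset M} {x y z : M} (h : ∀ r ∈ s, r = x ∨ r = y ∨ r = z) :
    ∃ a b c : ℕ, a + b + c = card s ∧ s.sum = a • x + b • y + c • z := by
  induction s using Multiset.induction_on with
  | empty => exact ⟨0, 0, 0, by simp⟩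
  | cons r s ih =>
    obtain ⟨a, b, c, hcard, hsum⟩ := ih fun r' hr' => h r' (mem_cons_of_mem hr')
    rw [card_cons, sum_cons, hsum, ← hcard]
    rcases h r (mem_cons_self r s) with rfl | rfl | rfl
    · exact ⟨a + 1, b, c, by omega, by rw [succ_nsmul']; abel⟩
    · exact ⟨a, b + 1, c, by omega, by rw [succ_nsmul']; abel⟩
    · exact ⟨a, b, c + 1, by omega, by rw [succ_nsmul']; abel⟩

theorem Rat.not_isSquare_four_pow_add_one (m : ℕ) : ¬ IsSquare ((4 : ℚ) ^ m + 1) := by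
  have hcast : (4 : ℚ) ^ m + 1 = ((2 ^ m * 2 ^ m + 1 : ℕ) : ℚ) := by
    push_cast; rw [← mul_pow]; norm_num
  rw [hcast, Rat.isSquare_natCast_iff]
  rintro ⟨r, hr⟩
  have hpos : 1 ≤ 2 ^ m := Nat.one_le_two_pow
  -- `r * r` would lie strictly between `(2^m)^2` and `(2^m + 1)^2`
  rcases le_or_gt r (2 ^ m) with hle | hlt <;> nlinarith

theorem spectrum.eval_eq_zero_of_aeval_eq_zero {𝕜 A : Type*} [Field 𝕜] [Ring A] [Algebra 𝕜 A]
    {a : A} {p : 𝕜[X]} (hp : aeval a p = 0) {r : 𝕜} (hr : r ∈ spectrum 𝕜 a) : p.eval r = 0 := by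
  have : Nontrivial A := by
    by_contra hA
    rw [not_nontrivial_iff_subsingleton] at hA
    simp [spectrum.of_subsingleton] at hr
  simpa [hp, spectrum.zero_eq] using spectrum.subset_polynomial_aeval a p ⟨r, hr, rfl⟩

namespace SimpleGraph

variable {V : Type*} {G : SimpleGraph V} [DecidableRel G.Adj]

theorem compl_adjMatrix_eq [DecidableEq V] {α : Type*} [AddCommGroup α] [One α] :
    Gᶜ.adjMatrix α = of 1 - 1 - G.adjMatrix α := by
  rw [← adjMatrix_completeGraph_eq_of_one_sub_one,
    ← IsCompl.adjMatrix_add_adjMatrix_eq_adjMatrix_completeGraph α (isCompl_compl (x := G))]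
  abel

variable [Fintype V] {n k ℓ μ : ℕ}

theorem IsRegularOfDegree.adjMatrix_mul_of_one {α : Type*} [NonAssocSemiring α]
    (h : G.IsRegularOfDegree k) : G.adjMatrix α * of 1 = k • of 1 := by
  ext i j
  simp [adjMatrix_mul_apply, h i]

theorem IsSRGWith.aeval_adjMatrix [DecidableEq V] {α : Type*} [CommRing α] (h : G.IsSRGWith n k ℓ μ) :
    aeval (G.adjMatrix α)
      ((X - C (k : α)) * (X ^ 2 - C ((ℓ : α) - μ) * X - C ((k : α) - μ))) = 0 := by
  have hquad : G.adjMatrix α ^ 2 - ((ℓ : α) - μ) • G.adjMatrix α - ((k : α) - μ) • 1 =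
      (μ : α) • of 1 := by
    rw [h.matrix_eq, compl_adjMatrix_eq]
    simp only [← Nat.cast_smul_eq_nsmul α]
    module
  rw [aeval_mul, aeval_sub, aeval_sub, aeval_sub, aeval_mul, aeval_X_pow, aeval_X, aeval_C,
    aeval_C, aeval_C, Algebra.algebraMap_eq_smul_one, Algebra.algebraMap_eq_smul_one,
    Algebra.algebraMap_eq_smul_one, smul_mul_assoc, one_mul, hquad, mul_smul_comm, sub_mul,
    h.regular.adjMatrix_mul_of_one, smul_mul_assoc, one_mul, ← Nat.cast_smul_eq_nsmul α,
    sub_self, smul_zero]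

theorem IsSRGWith.exists_nsmul_add_nsmul_add_nsmul_eq_zero (h : G.IsSRGWith n k ℓ μ) {θ τ : ℂ} (hsum : θ + τ = ℓ - μ) (hprod : θ * τ = μ - k) :
    ∃ a b c : ℕ, a + b + c = n ∧ a • (k : ℂ) + b • θ + c • τ = 0 := by
  classical
  have hroots : ∀ r ∈ (G.adjMatrix ℂ).charpoly.roots, r = k ∨ r = θ ∨ r = τ := by
    intro r hr
    have hr := mem_spectrum_of_isRoot_charpoly (isRoot_of_mem_roots hr)
    have hspec := spectrum.eval_eq_zero_of_aeval_eq_zero (h.aeval_adjMatrix (α := ℂ)) hr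
    simp only [eval_mul, eval_sub, eval_X, eval_C, eval_pow] at hspec
    have hfactor : (r - k) * ((r - θ) * (r - τ)) = 0 := by
      linear_combination hspec - (r - k) * r * hsum + (r - k) * hprod
    simpa only [mul_eq_zero, sub_eq_zero] using hfactor
  obtain ⟨a, b, c, hcard, hsum⟩ := Multiset.exists_sum_eq_nsmul_add_nsmul_add_nsmul hroots
  refine ⟨a, b, c, ?_, ?_⟩
  · rw [hcard, ← (IsAlgClosed.splits (G.adjMatrix ℂ).charpoly).natDegree_eq_card_roots,
      charpoly_natDegree_eq_dim, h.card]
  · rw [← hsum, ← trace_eq_sum_roots_charpoly, trace_adjMatrix]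

theorem IsSRGWith.isSquare_discrim_or (h : G.IsSRGWith n k ℓ μ) :
    IsSquare (discrim (1 : ℚ) (μ - ℓ) (μ - k)) ∨
      ∃ a b : ℕ, a + 2 * b = n ∧ a * (k : ℤ) + b * ((ℓ : ℤ) - μ) = 0 := by
  obtain ⟨ε, hε⟩ := IsAlgClosed.exists_eq_mul_self (discrim (1 : ℂ) (μ - ℓ) (μ - k))
  rw [discrim] at hε
  obtain ⟨a, b, c, hcard, hzero⟩ := h.exists_nsmul_add_nsmul_add_nsmul_eq_zero
    (θ := (ℓ - μ + ε) / 2) (τ := (ℓ - μ - ε) / 2) (by ring) (by linear_combination hε / 4)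
  simp only [nsmul_eq_mul] at hzero
  by_cases hbc : b = c
  · subst hbc
    refine Or.inr ⟨a, b, by omega, ?_⟩
    exact_mod_cast (by linear_combination hzero : (a * k + b * (ℓ - μ) : ℂ) = 0)
  · left
    set q : ℚ := -(2 * a * k + (b + c) * (ℓ - μ)) / (b - c)
    have hεq : ε = q := by
      have hbc' : (b : ℂ) - c ≠ 0 := sub_ne_zero.mpr (by exact_mod_cast hbc)
      simp only [q]
      push_cast
      field_simp
      linear_combination 2 * hzero
    refine ⟨q, Rat.cast_injective (α := ℂ) ?_⟩
    rw [discrim]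
    push_cast
    rw [← hεq, ← hε]

end SimpleGraph

end

theorem IsSRG.isSRGWith {V : Type*} [Fintype V] {G : SimpleGraph V} [DecidableRel G.Adj]
    {v k l m : ℕ} (h : IsSRG G v k l m) : G.IsSRGWith v k l m where
  card := by rw [← Nat.card_eq_fintype_card, h.1]
  regular x := by
    rw [← G.card_neighborSet_eq_degree, ← Nat.card_eq_fintype_card, Nat.card_coe_set_eq,
      h.2.2.2.1 x]
  of_adj x y hxy := by
    rw [← Nat.card_eq_fintype_card, Nat.card_coe_set_eq]
    exact h.2.2.2.2.1 x y hxy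
  of_not_adj x y hne hxy := by
    rw [← Nat.card_eq_fintype_card, Nat.card_coe_set_eq]
    exact h.2.2.2.2.2 x y hne hxy

theorem stmt13 (s : ℕ) (hs : 2 ≤ s) (V : Type*) (G : SimpleGraph V) :
    ¬ IsSRG G (2 ^ (2 * s + 1) - 1) (2 ^ (s + 1) - 2) (2 ^ s - 3) 1 := by
  intro hG
  obtain ⟨t, rfl⟩ := Nat.exists_eq_add_of_le' hs
  have hpow : (4 : ℚ) ^ (t + 1) = 4 * ((2 ^ t : ℕ) : ℚ) ^ 2 := by
    rw [pow_succ', Nat.cast_pow, ← pow_mul, pow_mul']; norm_num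
  rw [show 2 ^ (2 * (t + 2) + 1) = 32 * (2 ^ t) ^ 2 by ring,
    show 2 ^ (t + 2 + 1) = 8 * 2 ^ t by ring, show 2 ^ (t + 2) = 4 * 2 ^ t by ring] at hG
  have hw : 1 ≤ 2 ^ t := Nat.one_le_two_pow
  generalize 2 ^ t = w at hG hpow hw
  have hw2 : 1 ≤ w ^ 2 := Nat.one_le_pow _ _ hw
  have : Finite V := Nat.finite_of_card_ne_zero (by rw [hG.1]; omega)
  have := Fintype.ofFinite V
  classical
  rcases hG.isSRGWith.isSquare_discrim_or with ⟨q, hq⟩ | ⟨a, b, hcard, hzero⟩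
  · refine Rat.not_isSquare_four_pow_add_one (t + 1) ⟨q / 2, ?_⟩
    rw [discrim, Nat.cast_sub (by omega), Nat.cast_sub (by omega)] at hq
    push_cast at hq
    linear_combination hq / 4 + hpow
  · rw [Nat.cast_sub (by omega), Nat.cast_sub (by omega)] at hzero
    push_cast at hzero
    have ha : a = 0 := by nlinarith
    omega
end

section
/- Let G be a finite non-abelian group. The commuting graph Γ(G) (on vertex set G \ Z(G)) is strongly regular if and only if Γ(G) ≅ mK_s where ms = |G \ Z(G)| and s = ([C_G(x) : Z(G)] − 1)·|Z(G)| for all non-central x ∈ G. -/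
open scoped commutatorElement

open Pointwise Subgroup

/-!
A non-abelian group has distinct non-central `x, y` with `C(x) = C(y)`: take `y = x z` with
`1 ≠ z ∈ Z(G)`, or `y = x⁻¹`; if neither exists, every element is an involution. Along such an
edge `N(x) \ {y} ⊆ N(y)`, so `λ = k - 1`, and then counting common neighbours gives
`N(a) \ {b} ⊆ N(b)` along every edge: adjacency is transitive, and the graph is a disjoint union
of cliques `K_{k+1}`, where `k + 1 = |C(x) \ Z(G)| = ([C(x) : Z(G)] - 1) |Z(G)|`. Conversely
`m K_s` with an edge and a non-edge is strongly regular with parameters `(ms, s - 1, s - 2, 0)`.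
-/

namespace SimpleGraph

variable {V W : Type*} {Γ : SimpleGraph V} {Γ' : SimpleGraph W}

lemma Iso.ncard_preimage (e : Γ ≃g Γ') (s : Set W) : (e ⁻¹' s).ncard = s.ncard :=
  Set.ncard_preimage_of_injective_subset_range e.injective (by simp [e.surjective.range_eq])

lemma ncard_neighborSet_inter_eq_iff [Finite V] {a b : V} (hab : Γ.Adj a b) :
    (Γ.neighborSet a ∩ Γ.neighborSet b).ncard = (Γ.neighborSet a).ncard - 1 ↔
      Γ.neighborSet a \ {b} ⊆ Γ.neighborSet b := by
  have hsub : Γ.neighborSet a ∩ Γ.neighborSet b ⊆ Γ.neighborSet a \ {b} :=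
    fun c ⟨hac, hbc⟩ => ⟨hac, fun hcb => Γ.loopless.irrefl b (hcb ▸ hbc)⟩
  rw [← Set.ncard_sdiff_singleton_of_mem (s := Γ.neighborSet a) hab]
  refine ⟨fun h c hc => (Set.eq_of_subset_of_ncard_le hsub h.ge ▸ hc).2,
    fun h => congrArg Set.ncard (hsub.antisymm fun c hc => ⟨hc.1, h hc⟩)⟩

lemma neighborSet_sdiff_subset_of_edgeRegular [Finite V] {k l : ℕ}
    (hreg : ∀ x, (Γ.neighborSet x).ncard = k)
    (hl : ∀ x y, Γ.Adj x y → (Γ.neighborSet x ∩ Γ.neighborSet y).ncard = l)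
    {x y : V} (hxy : Γ.Adj x y) (hsub : Γ.neighborSet x \ {y} ⊆ Γ.neighborSet y)
    {a b : V} (hab : Γ.Adj a b) : Γ.neighborSet a \ {b} ⊆ Γ.neighborSet b := by
  have hlk : l = k - 1 := by
    rw [← hl x y hxy, (ncard_neighborSet_inter_eq_iff hxy).2 hsub, hreg]
  rw [← ncard_neighborSet_inter_eq_iff hab, hl a b hab, hreg, hlk]

lemma exists_iso_mKn [Finite V] {k : ℕ} (hreg : ∀ x, (Γ.neighborSet x).ncard = k)
    (htrans : ∀ a b, Γ.Adj a b → Γ.neighborSet a \ {b} ⊆ Γ.neighborSet b) :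
    ∃ m, Nonempty (Γ ≃g mKn m (k + 1)) ∧ m * (k + 1) = Nat.card V := by
  let r : Setoid V :=
    { r := fun x y => x = y ∨ Γ.Adj x y
      iseqv :=
        { refl := fun _ => Or.inl rfl
          symm := fun h => h.imp Eq.symm Adj.symm
          trans := by
            rintro x y z (rfl | hxy) (rfl | hyz)
            · exact Or.inl rfl
            · exact Or.inr hyz
            · exact Or.inr hxy
            · by_cases hxz : x = z
              · exact Or.inl hxz
              · exact Or.inr (htrans y x hxy.symm ⟨hyz, Ne.symm hxz⟩) } }
  have hfiber (q : Quotient r) : Nat.card {x // Quotient.mk r x = q} = k + 1 := by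
    induction q using Quotient.ind with
    | _ x₀ =>
      have hclass : {x | Quotient.mk r x = Quotient.mk r x₀} = insert x₀ (Γ.neighborSet x₀) := by
        ext y
        simp only [Set.mem_ofPred_eq, Quotient.eq, Set.mem_insert_iff, mem_neighborSet]
        exact or_congr Iff.rfl ⟨Adj.symm, Adj.symm⟩
      rw [← Set.coe_ofPred, Nat.card_coe_set_eq, hclass,
        Set.ncard_insert_of_notMem (s := Γ.neighborSet x₀) (Γ.loopless.irrefl x₀), hreg]
  let eQ := Finite.equivFin (Quotient r)
  let e : V ≃ Fin (Nat.card (Quotient r)) × Fin (k + 1) :=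
    (Equiv.sigmaFiberEquiv (Quotient.mk r)).symm.trans
      ((Equiv.sigmaCongrRight fun q => (Finite.equivFin _).trans (finCongr (hfiber q))).trans
        ((Equiv.sigmaEquivProd _ _).trans (Equiv.prodCongr eQ (Equiv.refl _))))
  have hfst (x : V) : (e x).1 = eQ (Quotient.mk r x) := rfl
  refine ⟨Nat.card (Quotient r), ⟨⟨e, fun {a b} => ?_⟩⟩, ?_⟩
  · change e a ≠ e b ∧ (e a).1 = (e b).1 ↔ Γ.Adj a b
    rw [hfst, hfst, eQ.apply_eq_iff_eq, Quotient.eq, e.injective.ne_iff]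
    exact ⟨fun ⟨hne, h⟩ => h.resolve_left hne, fun h => ⟨h.ne, Or.inr h⟩⟩
  · rw [Nat.card_congr e, Nat.card_prod, Nat.card_fin, Nat.card_fin]

end SimpleGraph

open SimpleGraph

lemma mKn_neighborSet {m s : ℕ} (p : Fin m × Fin s) :
    (mKn m s).neighborSet p = {q | q.1 = p.1} \ {p} := by
  ext q
  simp only [mem_neighborSet, mKn, Set.mem_sdiff, Set.mem_ofPred_eq, Set.mem_singleton_iff]
  exact ⟨fun ⟨hne, h⟩ => ⟨h.symm, hne.symm⟩, fun ⟨h, hne⟩ => ⟨Ne.symm hne, h.symm⟩⟩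

lemma Set.ncard_setOf_fst_eq {α β : Type*} (a : α) :
    {q : α × β | q.1 = a}.ncard = Nat.card β := by
  have : {q : α × β | q.1 = a} = {a} ×ˢ Set.univ := by ext; simp
  rw [this, Set.ncard_prod, Set.ncard_singleton, Set.ncard_univ, one_mul]

lemma isSRG_mKn {m s : ℕ} (hm : 2 ≤ m) (hs : 2 ≤ s) :
    IsSRG (mKn m s) (m * s) (s - 1) (s - 2) 0 := by
  have hblock (i : Fin m) : {q : Fin m × Fin s | q.1 = i}.ncard = s := by
    rw [Set.ncard_setOf_fst_eq, Nat.card_fin]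
  refine ⟨by simp, by omega, by have := Nat.mul_le_mul_right s hm; omega, fun p => ?_,
    fun p q ⟨hne, h⟩ => ?_, fun p q hne hpq => ?_⟩
  · rw [mKn_neighborSet, Set.ncard_sdiff_singleton_of_mem (show p ∈ {q | q.1 = p.1} from rfl),
      hblock]
  · have : (mKn m s).neighborSet p ∩ (mKn m s).neighborSet q = {r | r.1 = p.1} \ {p, q} := by
      ext r
      simp only [mKn_neighborSet, h, Set.mem_inter_iff, Set.mem_sdiff, Set.mem_ofPred_eq,
        Set.mem_singleton_iff, Set.mem_insert_iff]
      tauto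
    rw [this, Set.ncard_sdiff (by simp [Set.insert_subset_iff, h]), Set.ncard_pair hne, hblock]
  · have hfst : p.1 ≠ q.1 := fun h => hpq ⟨hne, h⟩
    rw [Set.ncard_eq_zero]
    ext r
    simp only [mKn_neighborSet, Set.mem_inter_iff, Set.mem_sdiff, Set.mem_ofPred_eq,
      Set.mem_empty_iff_false, iff_false]
    exact fun ⟨⟨h₁, _⟩, h₂, _⟩ => hfst (h₁.symm.trans h₂)

lemma two_le_of_mKn_adj {m s : ℕ} {p q : Fin m × Fin s} (h : (mKn m s).Adj p q) : 2 ≤ s := by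
  have : p.2 ≠ q.2 := fun h' => h.1 (Prod.ext h.2 h')
  have := Fin.val_injective.ne this
  omega

lemma two_le_of_mKn_not_adj {m s : ℕ} {p q : Fin m × Fin s} (hne : p ≠ q)
    (h : ¬ (mKn m s).Adj p q) : 2 ≤ m := by
  have : p.1 ≠ q.1 := fun h' => h ⟨hne, h'⟩
  have := Fin.val_injective.ne this
  omega

lemma IsSRG.of_iso {V W : Type*} {Γ : SimpleGraph V} {Γ' : SimpleGraph W} (e : Γ ≃g Γ')
    {v k l m : ℕ} (h : IsSRG Γ' v k l m) : IsSRG Γ v k l m := by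
  obtain ⟨hv, hk, hkv, hreg, hl, hm⟩ := h
  have hN (x : V) : Γ.neighborSet x = e ⁻¹' Γ'.neighborSet (e x) :=
    (e.toEmbedding.preimage_neighborSet x).symm
  refine ⟨Nat.card_congr e.toEquiv ▸ hv, hk, hkv, fun x => ?_, fun x y hxy => ?_,
    fun x y hxy hnadj => ?_⟩
  · rw [hN, e.ncard_preimage, hreg]
  · rw [hN, hN, ← Set.preimage_inter, e.ncard_preimage, hl _ _ (e.map_adj_iff.2 hxy)]
  · rw [hN, hN, ← Set.preimage_inter, e.ncard_preimage,
      hm _ _ (e.injective.ne hxy) (mt e.map_adj_iff.1 hnadj)]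

lemma centralizer_mul_mem_center {G : Type*} [Group G] (a : G) {z : G} (hz : z ∈ center G) :
    centralizer {a * z} = centralizer {a} := by
  ext g
  simp only [mem_centralizer_singleton_iff]
  rw [mul_assoc, ← mem_center_iff.1 hz g, ← mul_assoc, ← mul_assoc, mul_left_inj]

lemma centralizer_inv_singleton {G : Type*} [Group G] (a : G) :
    centralizer {a⁻¹} = centralizer {a} := by
  ext g
  simp only [mem_centralizer_singleton_iff]
  exact Commute.inv_right_iff

lemma exists_ne_centralizer_eq {G : Type*} [Group G] (hna : ∃ a b : G, a * b ≠ b * a) :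
    ∃ x y : G, x ∉ center G ∧ x ≠ y ∧ centralizer {x} = centralizer {y} := by
  obtain ⟨a, b, hab⟩ := hna
  have ha : a ∉ center G := fun h => hab (mem_center_iff.1 h b).symm
  by_cases hZ : ∃ z ∈ center G, z ≠ 1
  · obtain ⟨z, hz, hz1⟩ := hZ
    exact ⟨a, a * z, ha, by simpa using hz1, (centralizer_mul_mem_center a hz).symm⟩
  by_cases hinv : ∃ x ∉ center G, x⁻¹ ≠ x
  · obtain ⟨x, hx, hxinv⟩ := hinv
    exact ⟨x, x⁻¹, hx, hxinv.symm, (centralizer_inv_singleton x).symm⟩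
  -- Otherwise every element is an involution, so `G` would be abelian.
  push Not at hZ hinv
  refine absurd (Commute.of_orderOf_dvd_two (fun g => ?_) a b) hab
  rw [orderOf_dvd_iff_pow_eq_one, pow_two, mul_eq_one_iff_eq_inv]
  by_cases hg : g ∈ center G
  · simp [hZ g hg]
  · exact (hinv g hg).symm

lemma card_mul_relIndex {G : Type*} [Group G] {H K : Subgroup G} (h : H ≤ K) :
    Nat.card H * H.relIndex K = Nat.card K := by
  rw [← relIndex_bot_left, ← relIndex_bot_left]
  exact relIndex_mul_relIndex _ _ _ bot_le h

lemma ncard_neighborSet_commGraph_add_one {G : Type*} [Group G] [Finite G]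
    (x : ((center G : Set G)ᶜ : Set G)) :
    ((commGraph G (center G : Set G)ᶜ).neighborSet x).ncard + 1 =
      ((center G).relIndex (centralizer {(x : G)}) - 1) * Nat.card (center G) := by
  have hZC : center G ≤ centralizer {(x : G)} := center_le_centralizer _
  have hclass : (centralizer {(x : G)} : Set G) \ center G =
      insert (x : G) (Subtype.val '' (commGraph G (center G : Set G)ᶜ).neighborSet x) := by
    ext g
    constructor
    · rintro ⟨hgx, hg⟩
      by_cases hgx' : g = x
      · exact Or.inl hgx'
      · exact Or.inr ⟨⟨g, hg⟩, ⟨fun h => hgx' (congrArg Subtype.val h).symm,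
          (mem_centralizer_singleton_iff.1 hgx).symm⟩, rfl⟩
    · rintro (rfl | ⟨y, ⟨-, hxy⟩, rfl⟩)
      · exact ⟨mem_centralizer_singleton_iff.2 rfl, x.2⟩
      · exact ⟨mem_centralizer_singleton_iff.2 hxy.symm, y.2⟩
  have hx : (x : G) ∉ Subtype.val '' (commGraph G (center G : Set G)ᶜ).neighborSet x :=
    fun ⟨y, hy, hyx⟩ => hy.1 (Subtype.ext hyx).symm
  have hcard (H : Subgroup G) : (H : Set G).ncard = Nat.card H := Nat.card_coe_set_eq _ |>.symm
  rw [← Set.ncard_image_of_injective _ Subtype.val_injective, ← Set.ncard_insert_of_notMem hx,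
    ← hclass, Set.ncard_sdiff hZC, hcard, hcard,
    ← card_mul_relIndex hZC, mul_comm _ (Nat.card _), Nat.mul_sub_one]

theorem stmt17 (G : Type*) [Group G] [Finite G] (hna : ∃ a b : G, a * b ≠ b * a) :
    (∃ v k l m, IsSRG (commGraph G ((Subgroup.center G : Set G))ᶜ) v k l m) ↔
      ∃ m s : ℕ,
        Nonempty (commGraph G ((Subgroup.center G : Set G))ᶜ ≃g mKn m s) ∧
        m * s = Nat.card ↥(((Subgroup.center G : Set G))ᶜ) ∧
        ∀ x : G, x ∉ Subgroup.center G →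
          s = ((Subgroup.center G).relIndex (Subgroup.centralizer {x}) - 1)
                * Nat.card (Subgroup.center G) := by
  set Γ := commGraph G (center G : Set G)ᶜ
  obtain ⟨x, y, hx, hxy, hC⟩ := exists_ne_centralizer_eq hna
  have hy : y ∉ center G := fun hy => hx <| Set.singleton_subset_iff.1 <|
    centralizer_eq_top_iff_subset.1 <| hC.trans <|
      centralizer_eq_top_iff_subset.2 (Set.singleton_subset_iff.2 hy)
  have hyx : y ∈ centralizer {x} := hC ▸ mem_centralizer_singleton_iff.2 rfl
  have hXY : Γ.Adj ⟨x, hx⟩ ⟨y, hy⟩ :=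
    ⟨fun h => hxy (congrArg Subtype.val h), (mem_centralizer_singleton_iff.1 hyx).symm⟩
  constructor
  · rintro ⟨v, k, l, μ, -, -, -, hreg, hl, -⟩
    have hsub : Γ.neighborSet ⟨x, hx⟩ \ {⟨y, hy⟩} ⊆ Γ.neighborSet ⟨y, hy⟩ := by
      rintro z ⟨⟨-, hxz⟩, hzy⟩
      have hz : (z : G) ∈ centralizer {y} := hC ▸ mem_centralizer_singleton_iff.2 hxz.symm
      exact ⟨fun h => hzy h.symm, (mem_centralizer_singleton_iff.1 hz).symm⟩
    obtain ⟨m, hiso, hcard⟩ :=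
      exists_iso_mKn hreg fun _ _ => neighborSet_sdiff_subset_of_edgeRegular hreg hl hXY hsub
    refine ⟨m, k + 1, hiso, hcard, fun z hz => ?_⟩
    rw [← ncard_neighborSet_commGraph_add_one ⟨z, hz⟩, hreg]
  · rintro ⟨m, s, ⟨e⟩, -, -⟩
    obtain ⟨a, b, hab⟩ := hna
    have ha : a ∉ center G := fun h => hab (mem_center_iff.1 h b).symm
    have hb : b ∉ center G := fun h => hab (mem_center_iff.1 h a)
    have hAB : (⟨a, ha⟩ : ((center G : Set G)ᶜ : Set G)) ≠ ⟨b, hb⟩ :=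
      fun h => hab (by rw [show a = b from congrArg Subtype.val h])
    exact ⟨_, _, _, _, (isSRG_mKn
      (two_le_of_mKn_not_adj (e.injective.ne hAB) (mt e.map_adj_iff.1 fun h => hab h.2))
      (two_le_of_mKn_adj (e.map_adj_iff.2 hXY))).of_iso e⟩
end
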